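/- Let p = p₁ · p₂ be a product of two nonzero polynomials in M complex variables such that E(p₁) ⊥ E(p₂). Then E(p) = E(p₁) ⊕ E(p₂) (orthogonal direct sum), provided both p₁ and p₂ are nonconstant. -/

import Mathlib

/-!
Write `D_v = ∑ⱼ vⱼ ∂ⱼ`. A vector `w` is orthogonal to `E(p)` exactly when `p` is constant along
`conj w`; so `E(p₁) ⊕ E(p₂) ≤ E(p₁p₂)` amounts to: `D_v (p₁p₂) = 0` forces `D_v p₁ = D_v p₂ = 0`.
Orthogonality makes `p₂` constant along `conj E(p₁)`, while `p₁` is constant along the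
complementary directions, so for any `z, z₀` a single point sees `p₁, D_v p₁` as at `z` and
`p₂, D_v p₂` as at `z₀`. Evaluating `p₂ D_v p₁ + p₁ D_v p₂ = 0` there separates the variables:
`D_v p₁ = c p₁`, and restricting to a line shows that such an eigenvector with `c ≠ 0` vanishes.
The reverse inclusion is the product rule.
-/

open MvPolynomial

/-- Gradient of a multivariate polynomial: vector of formal partial derivatives evaluated at `z`. -/
noncomputable def grad {M : ℕ} (p : MvPolynomial (Fin M) ℂ) (z : Fin M → ℂ) : Fin M → ℂ :=
  fun j => eval z (pderiv j p)

/-- Space of essential variables: span of all pointwise evaluations of the gradient. -/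
noncomputable def essSpace {M : ℕ} (p : MvPolynomial (Fin M) ℂ) : Submodule ℂ (Fin M → ℂ) :=
  Submodule.span ℂ (Set.range (grad p))

/-- Composition of a polynomial with a linear change of variables: `(compLin U p)(z) = p (U z)`. -/
noncomputable def compLin {M : ℕ} (U : Matrix (Fin M) (Fin M) ℂ) (p : MvPolynomial (Fin M) ℂ) :
    MvPolynomial (Fin M) ℂ :=
  aeval (fun i => ∑ j, C (U i j) * X j) p

/-- Standard Hermitian inner product on `ℂ^M`. -/
noncomputable def herm {M : ℕ} (v w : Fin M → ℂ) : ℂ := ∑ j, (starRingEnd ℂ) (v j) * w j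

section Herm

variable {M : ℕ}

open scoped InnerProductSpace

lemma herm_eq_inner (v w : Fin M → ℂ) :
    herm v w = ⟪WithLp.toLp 2 v, WithLp.toLp 2 w⟫_ℂ := by
  simp [herm, PiLp.inner_apply, mul_comm]

lemma eq_zero_of_herm_self {v : Fin M → ℂ} (h : herm v v = 0) : v = 0 := by
  rw [herm_eq_inner, inner_self_eq_zero] at h
  simpa using h

lemma toLp_mem_orthogonal_comap_iff {S : Submodule ℂ (Fin M → ℂ)} {y : Fin M → ℂ} :
    WithLp.toLp 2 y ∈ (S.comap (WithLp.linearEquiv 2 ℂ (Fin M → ℂ)).toLinearMap)ᗮ ↔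
      ∀ s ∈ S, herm y s = 0 := by
  simp only [Submodule.mem_orthogonal', Submodule.mem_comap, herm_eq_inner]
  exact ⟨fun h s hs => h _ hs, fun h u hu => h _ hu⟩

lemma exists_add_mem_herm_orthogonal (S : Submodule ℂ (Fin M → ℂ)) (x : Fin M → ℂ) :
    ∃ u ∈ S, ∃ y, x = u + y ∧ ∀ s ∈ S, herm y s = 0 := by
  obtain ⟨u, hu, y, hy, hxy⟩ :=
    (S.comap (WithLp.linearEquiv 2 ℂ (Fin M → ℂ)).toLinearMap).exists_add_mem_mem_orthogonal
      (WithLp.toLp 2 x)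
  exact ⟨u.ofLp, hu, y.ofLp, congrArg WithLp.ofLp hxy, toLp_mem_orthogonal_comap_iff.1 hy⟩

lemma le_of_herm_orthogonal {S T : Submodule ℂ (Fin M → ℂ)}
    (h : ∀ w, (∀ t ∈ T, herm w t = 0) → ∀ s ∈ S, herm w s = 0) : S ≤ T := by
  have := Submodule.orthogonal_le_orthogonal_iff.1 fun y hy =>
    toLp_mem_orthogonal_comap_iff.2 (h y.ofLp (toLp_mem_orthogonal_comap_iff.1 hy))
  intro s hs
  simpa using this (show WithLp.toLp 2 s ∈ _ from hs)

end Herm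

open Polynomial in
lemma Polynomial.eq_zero_of_derivative_eq_smul {R : Type*} [CommRing R] [IsDomain R]
    {f : R[X]} {c : R} (hc : c ≠ 0) (h : derivative f = c • f) : f = 0 := by
  by_contra hf
  rcases eq_or_ne f.natDegree 0 with hdeg | hdeg
  · rw [derivative_of_natDegree_zero hdeg, eq_comm, smul_eq_zero] at h
    exact h.elim hc hf
  · have := natDegree_derivative_lt hdeg
    rw [h, natDegree_smul _ hc] at this
    exact this.false

section Directional

variable {σ R : Type*} [CommRing R]

noncomputable def restrictLine (z v : σ → R) : MvPolynomial σ R →ₐ[R] Polynomial R :=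
  aeval fun i => Polynomial.C (z i) + Polynomial.C (v i) * Polynomial.X

lemma eval_restrictLine (z v : σ → R) (t : R) (p : MvPolynomial σ R) :
    (restrictLine z v p).eval t = eval (z + t • v) p := by
  have : (Polynomial.aeval t).comp (restrictLine z v) = aeval (z + t • v) :=
    algHom_ext fun i => by simp [restrictLine]; ring
  simpa [coe_aeval_eq_eval] using DFunLike.congr_fun this p

variable [Fintype σ]

noncomputable def dirDeriv (v : σ → R) : Derivation R (MvPolynomial σ R) (MvPolynomial σ R) :=
  ∑ j, v j • pderiv j

lemma dirDeriv_apply (v : σ → R) (p : MvPolynomial σ R) :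
    dirDeriv v p = ∑ j, v j • pderiv j p := by
  rw [dirDeriv, ← Derivation.coeFnAddMonoidHom_apply, map_sum, Finset.sum_apply]
  rfl

lemma dirDeriv_X (v : σ → R) (i : σ) : dirDeriv v (X i) = C (v i) := by
  classical
  simp [dirDeriv_apply, pderiv_X, Pi.single_apply, smul_eq_C_mul]

lemma dirDeriv_comm (u v : σ → R) (p : MvPolynomial σ R) :
    dirDeriv u (dirDeriv v p) = dirDeriv v (dirDeriv u p) := by
  have : ⁅dirDeriv u, dirDeriv v⁆ = 0 := derivation_ext fun i => by
    simp [Derivation.commutator_apply, dirDeriv_X]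
  simpa [Derivation.commutator_apply, sub_eq_zero] using congrArg (· p) this

lemma derivative_restrictLine (z v : σ → R) (p : MvPolynomial σ R) :
    Polynomial.derivative (restrictLine z v p) = restrictLine z v (dirDeriv v p) := by
  induction p using MvPolynomial.induction_on with
  | C a => simp [restrictLine]
  | add p q hp hq => simp [hp, hq]
  | mul_X p i h =>
    have hX : restrictLine z v (X i) = .C (z i) + .C (v i) * .X := aeval_X _ _
    have hC : restrictLine z v (C (v i)) = .C (v i) := aeval_C _ _
    rw [map_mul, Polynomial.derivative_mul, h, Derivation.leibniz, dirDeriv_X, smul_eq_mul,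
      smul_eq_mul, map_add, map_mul, map_mul, hX, hC]
    simp
    ring

lemma eval_add_of_dirDeriv_eq_zero [IsAddTorsionFree R] {v : σ → R} {p : MvPolynomial σ R}
    (h : dirDeriv v p = 0) (z : σ → R) : eval (z + v) p = eval z p := by
  have hline : Polynomial.derivative (restrictLine z v p) = 0 := by
    rw [derivative_restrictLine, h, map_zero]
  have := congrArg (Polynomial.eval 1) (Polynomial.eq_C_of_derivative_eq_zero hline)
  rwa [Polynomial.eval_C, Polynomial.coeff_zero_eq_eval_zero, eval_restrictLine,
    eval_restrictLine, one_smul, zero_smul, add_zero] at this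

lemma eq_zero_of_dirDeriv_eq_smul [IsDomain R] [Infinite R] {v : σ → R}
    {p : MvPolynomial σ R} {c : R} (hc : c ≠ 0) (h : dirDeriv v p = c • p) : p = 0 :=
  MvPolynomial.funext fun z => by
    have hline : restrictLine z v p = 0 := Polynomial.eq_zero_of_derivative_eq_smul hc <| by
      rw [derivative_restrictLine, h, map_smul]
    simpa [eval_restrictLine] using congrArg (Polynomial.eval 0) hline

end Directional

section EssSpace

variable {M : ℕ}

lemma grad_mul (p q : MvPolynomial (Fin M) ℂ) (z : Fin M → ℂ) :
    grad (p * q) z = eval z q • grad p z + eval z p • grad q z := by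
  ext j
  simp only [grad, Derivation.leibniz, smul_eq_mul, map_add, map_mul, Pi.add_apply,
    Pi.smul_apply]
  ring

lemma grad_mem_essSpace (p : MvPolynomial (Fin M) ℂ) (z : Fin M → ℂ) : grad p z ∈ essSpace p :=
  Submodule.subset_span ⟨z, rfl⟩

lemma essSpace_mul_le (p q : MvPolynomial (Fin M) ℂ) :
    essSpace (p * q) ≤ essSpace p ⊔ essSpace q := by
  rw [essSpace, Submodule.span_le, Set.range_subset_iff]
  intro z
  rw [grad_mul]
  exact add_mem (Submodule.mem_sup_left (Submodule.smul_mem _ _ (grad_mem_essSpace p z)))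
    (Submodule.mem_sup_right (Submodule.smul_mem _ _ (grad_mem_essSpace q z)))

lemma eval_dirDeriv (v z : Fin M → ℂ) (p : MvPolynomial (Fin M) ℂ) :
    eval z (dirDeriv v p) = v ⬝ᵥ grad p z := by
  simp [dirDeriv_apply, grad, dotProduct, smul_eq_C_mul]

lemma dirDeriv_star_eq_zero_iff {w : Fin M → ℂ} {p : MvPolynomial (Fin M) ℂ} :
    dirDeriv (star w) p = 0 ↔ ∀ v ∈ essSpace p, herm w v = 0 := by
  change _ ↔ essSpace p ≤ LinearMap.ker (dotProductBilin ℂ ℂ (star w))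
  rw [essSpace, Submodule.span_le, Set.range_subset_iff]
  refine ⟨fun h z => ?_, fun h => MvPolynomial.funext fun z => ?_⟩
  · rw [SetLike.mem_coe, LinearMap.mem_ker, dotProductBilin_apply_apply, ← eval_dirDeriv,
      h, map_zero]
  · rw [eval_dirDeriv, map_zero]
    exact h z

lemma exists_eq_star_add_of_dirDeriv_eq_zero (p : MvPolynomial (Fin M) ℂ) (x : Fin M → ℂ) :
    ∃ a ∈ essSpace p, ∃ u, dirDeriv u p = 0 ∧ x = star a + u := by
  obtain ⟨a, ha, y, hxy, hy⟩ := exists_add_mem_herm_orthogonal (essSpace p) (star x)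
  exact ⟨a, ha, star y, dirDeriv_star_eq_zero_iff.2 hy, by rw [← star_add, ← hxy, star_star]⟩

variable {p₁ p₂ : MvPolynomial (Fin M) ℂ}

lemma essSpace_inf_eq_bot_of_orthogonal
    (horth : ∀ v ∈ essSpace p₁, ∀ w ∈ essSpace p₂, herm v w = 0) :
    essSpace p₁ ⊓ essSpace p₂ = ⊥ :=
  eq_bot_iff.2 fun v hv => eq_zero_of_herm_self (horth v hv.1 v hv.2)

lemma exists_dirDeriv_eq_smul_of_orthogonal (hp₂ : p₂ ≠ 0)
    (horth : ∀ v ∈ essSpace p₁, ∀ w ∈ essSpace p₂, herm v w = 0) {v : Fin M → ℂ}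
    (h : dirDeriv v (p₁ * p₂) = 0) : ∃ c : ℂ, dirDeriv v p₁ = c • p₁ := by
  obtain ⟨z₀, hz₀⟩ : ∃ z₀, eval z₀ p₂ ≠ 0 := by
    by_contra! h₀
    exact hp₂ (MvPolynomial.funext fun z => by simp [h₀])
  refine ⟨-eval z₀ (dirDeriv v p₂) / eval z₀ p₂, MvPolynomial.funext fun z => ?_⟩
  obtain ⟨a, ha, u, hu, hz⟩ := exists_eq_star_add_of_dirDeriv_eq_zero p₁ (z - z₀)
  have ha₂ : dirDeriv (star a) p₂ = 0 := dirDeriv_star_eq_zero_iff.2 (horth a ha)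
  have hu' : dirDeriv u (dirDeriv v p₁) = 0 := by rw [dirDeriv_comm, hu, map_zero]
  have ha₂' : dirDeriv (star a) (dirDeriv v p₂) = 0 := by rw [dirDeriv_comm, ha₂, map_zero]
  -- at `z₀ + star a`, the factor `p₁` looks as at `z` and the factor `p₂` as at `z₀`
  have key := congrArg (eval (z₀ + star a)) h
  rw [Derivation.leibniz, map_zero, map_add, smul_eq_mul, smul_eq_mul, map_mul, map_mul,
    eval_add_of_dirDeriv_eq_zero ha₂, eval_add_of_dirDeriv_eq_zero ha₂'] at key
  rw [smul_eval, show z = (z₀ + star a) + u by rw [add_assoc, ← hz, add_sub_cancel],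
    eval_add_of_dirDeriv_eq_zero hu, eval_add_of_dirDeriv_eq_zero hu']
  field_simp
  linear_combination key

lemma dirDeriv_eq_zero_of_dirDeriv_mul_eq_zero (hp₁ : p₁ ≠ 0) (hp₂ : p₂ ≠ 0)
    (horth : ∀ v ∈ essSpace p₁, ∀ w ∈ essSpace p₂, herm v w = 0) {v : Fin M → ℂ}
    (h : dirDeriv v (p₁ * p₂) = 0) : dirDeriv v p₁ = 0 ∧ dirDeriv v p₂ = 0 := by
  obtain ⟨c, hc⟩ := exists_dirDeriv_eq_smul_of_orthogonal hp₂ horth h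
  obtain rfl : c = 0 := by
    by_contra hc₀
    exact hp₁ (eq_zero_of_dirDeriv_eq_smul hc₀ hc)
  rw [zero_smul] at hc
  rw [Derivation.leibniz, hc, smul_zero, add_zero, smul_eq_mul, mul_eq_zero] at h
  exact ⟨hc, h.resolve_left hp₁⟩

end EssSpace

theorem essSpace_mul_of_orthogonal_general {M : ℕ} (p₁ p₂ : MvPolynomial (Fin M) ℂ)
    (hp₁ : p₁ ≠ 0) (hp₂ : p₂ ≠ 0)
    (horth : ∀ v ∈ essSpace p₁, ∀ w ∈ essSpace p₂, herm v w = 0) :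
    essSpace (p₁ * p₂) = essSpace p₁ ⊔ essSpace p₂ ∧
    essSpace p₁ ⊓ essSpace p₂ = ⊥ := by
  have hperp : ∀ w, (∀ v ∈ essSpace (p₁ * p₂), herm w v = 0) →
      (∀ v ∈ essSpace p₁, herm w v = 0) ∧ ∀ v ∈ essSpace p₂, herm w v = 0 := fun w hw => by
    simpa only [dirDeriv_star_eq_zero_iff] using
      dirDeriv_eq_zero_of_dirDeriv_mul_eq_zero hp₁ hp₂ horth (dirDeriv_star_eq_zero_iff.2 hw)
  refine ⟨le_antisymm (essSpace_mul_le p₁ p₂) (sup_le ?_ ?_),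
    essSpace_inf_eq_bot_of_orthogonal horth⟩
  · exact le_of_herm_orthogonal fun w hw => (hperp w hw).1
  · exact le_of_herm_orthogonal fun w hw => (hperp w hw).2

/-- For a product of two nonzero, nonconstant polynomials with orthogonal essential
spaces, the essential space of the product is the orthogonal direct sum. -/
theorem essSpace_mul_of_orthogonal {M : ℕ} (p₁ p₂ : MvPolynomial (Fin M) ℂ)
    (hp₁ : p₁ ≠ 0) (hp₂ : p₂ ≠ 0)
    (h₁ : p₁.totalDegree ≠ 0) (h₂ : p₂.totalDegree ≠ 0)
    (horth : ∀ v ∈ essSpace p₁, ∀ w ∈ essSpace p₂, herm v w = 0) :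
    essSpace (p₁ * p₂) = essSpace p₁ ⊔ essSpace p₂ ∧
    essSpace p₁ ⊓ essSpace p₂ = ⊥ :=
  essSpace_mul_of_orthogonal_general p₁ p₂ hp₁ hp₂ horth
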